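/- arXiv:1704.00705 — 4 statements merged into one kernel-verified Lean document; each statement's English description precedes it below -/
import Mathlib

section
/- Let G be a DAG partitioned into blocks V₁,…,V_k such that the quotient graph is acyclic and the blocks are topologically ordered (every edge of the quotient graph goes from a smaller to a larger index). If v ∈ V_i has no outgoing edge to a vertex in V_i (i.e., C_out(v,i) = 0), then moving v from V_i to V_{i+1} keeps the quotient graph acyclic. -/
/-!
Moving `v` from `V_i` to `V_{i+1}` keeps the block index monotone along every edge: in-edges of
`v` come from blocks `≤ i`, and out-edges of `v` go to blocks `> i`, i.e. `≥ i + 1`, because none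
stays in `V_i`. A block labelling that is monotone along edges makes every quotient edge strictly
increasing, so the quotient graph has no cycle.
-/

namespace Relation

theorem not_transGen_self_of_lt {α : Type*} [Preorder α] {r : α → α → Prop}
    (h : ∀ a b, r a b → a < b) (x : α) : ¬ TransGen r x x := fun hx => by
  have hlt := TransGen.mono h x x hx
  rw [transGen_eq_self] at hlt
  exact lt_irrefl x hlt

end Relation

section QuotientGraph

variable {V α : Type*}

def quotientAdj (E : V → V → Prop) (f : V → α) (a b : α) : Prop :=
  a ≠ b ∧ ∃ u w, E u w ∧ f u = a ∧ f w = b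

theorem quotientAdj_acyclic [PartialOrder α] (E : V → V → Prop) (f : V → α)
    (hmono : ∀ u w, E u w → f u ≤ f w) (x : α) :
    ¬ Relation.TransGen (quotientAdj E f) x x :=
  Relation.not_transGen_self_of_lt
    (fun _ _ ⟨hne, u, w, huw, hu, hw⟩ => lt_of_le_of_ne (hu ▸ hw ▸ hmono u w huw) hne) x

theorem update_le_update_of_le [DecidableEq V] [Preorder α] {E : V → V → Prop} {f : V → α}
    (hmono : ∀ u w, E u w → f u ≤ f w)
    {v : V} {j : α} (hin : ∀ u, E u v → f u ≤ j) (hout : ∀ w, E v w → j ≤ f w) :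
    ∀ u w, E u w → Function.update f v j u ≤ Function.update f v j w := by
  intro u w huw
  simp only [Function.update_apply]
  split_ifs with hu hw hw
  · exact le_rfl
  · exact hout w (hu ▸ huw)
  · exact hin u (hw ▸ huw)
  · exact hmono u w huw

end QuotientGraph

theorem stmt_1_general {V : Type*} [DecidableEq V] (E : V → V → Prop) (k : ℕ) (part : V → Fin k)
    (htopo : ∀ u w, E u w → part u ≤ part w)
    (v : V) (i : Fin k) (hv : part v = i) (hi : i.val + 1 < k)
    (hout : ∀ w, E v w → part w ≠ i) :
    ∀ x : Fin k, ¬ Relation.TransGen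
      (fun a b : Fin k => a ≠ b ∧ ∃ u w, E u w ∧
        Function.update part v ⟨i.val + 1, hi⟩ u = a ∧
        Function.update part v ⟨i.val + 1, hi⟩ w = b) x x := by
  have hin : ∀ u, E u v → part u ≤ ⟨i.val + 1, hi⟩ := fun u huv =>
    (hv ▸ htopo u v huv).trans (Fin.le_def.2 (Nat.le_succ _))
  have hout_succ : ∀ w, E v w → ⟨i.val + 1, hi⟩ ≤ part w := fun w hvw =>
    Fin.mk_le_of_le_val (lt_of_le_of_ne (hv ▸ htopo v w hvw) (hout w hvw).symm)
  exact quotientAdj_acyclic E _ (update_le_update_of_le htopo hin hout_succ)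

/-- If the blocks are topologically ordered and `v ∈ V_i` has no outgoing edge into `V_i`,
then moving `v` to `V_{i+1}` keeps the quotient graph acyclic. -/
theorem stmt_1 {V : Type*} [DecidableEq V] (E : V → V → Prop) (k : ℕ) (part : V → Fin k)
    (hdag : ∀ v, ¬ Relation.TransGen E v v)
    (htopo : ∀ u w, E u w → part u ≤ part w)
    (v : V) (i : Fin k) (hv : part v = i) (hi : i.val + 1 < k)
    (hout : ∀ w, E v w → part w ≠ i) :
    ∀ x : Fin k, ¬ Relation.TransGen
      (fun a b : Fin k => a ≠ b ∧ ∃ u w, E u w ∧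
        Function.update part v ⟨i.val + 1, hi⟩ u = a ∧
        Function.update part v ⟨i.val + 1, hi⟩ w = b) x x :=
  stmt_1_general E k part htopo v i hv hi hout
end

section
/- Let G be a DAG partitioned into blocks V₁,…,V_k topologically ordered. If v ∈ V_i has no incoming edge from a vertex in V_i (i.e., C_in(v,i) = 0), then moving v from V_i to V_{i-1} (for i ≥ 2) keeps the quotient graph acyclic. -/
/-! After the move every edge still goes from a block to one of no smaller index: the
in-neighbours of `v` lie in blocks strictly before `V_i`, hence no later than `V_{i-1}`. So each
edge of the quotient graph strictly increases the block index, and no cycle can close. -/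

section QuotientGraph

variable {V β : Type*}

def quotientGraph (E : V → V → Prop) (f : V → β) (a b : β) : Prop :=
  a ≠ b ∧ ∃ u w, E u w ∧ f u = a ∧ f w = b

theorem quotientGraph_lt [PartialOrder β] {E : V → V → Prop} {f : V → β}
    (hf : ∀ u w, E u w → f u ≤ f w) {a b : β} (hab : quotientGraph E f a b) : a < b := by
  obtain ⟨hne, u, w, huw, rfl, rfl⟩ := hab
  exact (hf u w huw).lt_of_ne hne

theorem not_transGen_quotientGraph_self [PartialOrder β] {E : V → V → Prop} {f : V → β}
    (hf : ∀ u w, E u w → f u ≤ f w) (x : β) :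
    ¬ Relation.TransGen (quotientGraph E f) x x := fun hx =>
  lt_irrefl x (Relation.transGen_minimal (r := quotientGraph E f) (r' := (· < ·))
    (fun _ _ => quotientGraph_lt hf) _ _ hx)

theorem update_le_update_of_rel [DecidableEq V] [Preorder β] {E : V → V → Prop} {f : V → β}
    (hf : ∀ u w, E u w → f u ≤ f w) {v : V} (hv : ¬ E v v) {b : β} (hb : b ≤ f v)
    (hpred : ∀ u, E u v → f u ≤ b) :
    ∀ u w, E u w → Function.update f v b u ≤ Function.update f v b w := by
  intro u w huw
  by_cases hu : u = v <;> by_cases hw : w = v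
  · subst hu hw
    exact absurd huw hv
  · subst hu
    rw [Function.update_self, Function.update_of_ne hw]
    exact hb.trans (hf u w huw)
  · subst hw
    rw [Function.update_self, Function.update_of_ne hu]
    exact hpred u huw
  · rw [Function.update_of_ne hu, Function.update_of_ne hw]
    exact hf u w huw

end QuotientGraph

theorem stmt_2_general {V : Type*} [DecidableEq V] (E : V → V → Prop) (k : ℕ) (part : V → Fin k)
    (hdag : ∀ v, ¬ Relation.TransGen E v v)
    (htopo : ∀ u w, E u w → part u ≤ part w)
    (v : V) (i : Fin k) (hv : part v = i)
    (hin : ∀ u, E u v → part u ≠ i) :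
    ∀ x : Fin k, ¬ Relation.TransGen
      (fun a b : Fin k => a ≠ b ∧ ∃ u w, E u w ∧
        Function.update part v ⟨i.val - 1, lt_of_le_of_lt (Nat.sub_le _ _) i.isLt⟩ u = a ∧
        Function.update part v ⟨i.val - 1, lt_of_le_of_lt (Nat.sub_le _ _) i.isLt⟩ w = b) x x := by
  refine not_transGen_quotientGraph_self (update_le_update_of_rel htopo
    (fun hvv => hdag v (.single hvv)) ?_ ?_)
  · rw [hv, Fin.le_def]
    exact Nat.sub_le _ _
  · intro u huv
    have hlt : part u < i := (hv ▸ htopo u v huv).lt_of_ne (hin u huv)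
    exact Fin.le_def.mpr (Nat.le_sub_one_of_lt (Fin.lt_def.mp hlt))

/-- If the blocks are topologically ordered and `v ∈ V_i` has no incoming edge from `V_i`,
then moving `v` to `V_{i-1}` (for `i ≥ 2`, i.e. `1 ≤ i.val` here) keeps the quotient graph
acyclic. -/
theorem stmt_2 {V : Type*} [DecidableEq V] (E : V → V → Prop) (k : ℕ) (part : V → Fin k)
    (hdag : ∀ v, ¬ Relation.TransGen E v v)
    (htopo : ∀ u w, E u w → part u ≤ part w)
    (v : V) (i : Fin k) (hv : part v = i) (hi : 1 ≤ i.val)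
    (hin : ∀ u, E u v → part u ≠ i) :
    ∀ x : Fin k, ¬ Relation.TransGen
      (fun a b : Fin k => a ≠ b ∧ ∃ u w, E u w ∧
        Function.update part v ⟨i.val - 1, lt_of_le_of_lt (Nat.sub_le _ _) i.isLt⟩ u = a ∧
        Function.update part v ⟨i.val - 1, lt_of_le_of_lt (Nat.sub_le _ _) i.isLt⟩ w = b) x x :=
  stmt_2_general E k part hdag htopo v i hv hin
end

section
/- The DGPAQ decision problem restricted to k = 2 and ε = 0 is NP-hard: the subset sum (partition) problem many-one reduces to it. Concretely: given positive integers a₁,…,a_n, construct the DAG G with vertex set {s, t, v₁,…,v_n}, edges (s, v_i) and (v_i, t) for all i, node weights c(s) = c(t) = A := Σᵢ 2aᵢ and c(vᵢ) = 2aᵢ. Then there exists a subset I ⊆ {1,…,n} with Σ_{i∈I} aᵢ = Σ_{i∉I} aᵢ if and only if G admits a partition into two blocks V₁, V₂ each of weight exactly 3A/2 whose quotient graph is acyclic. -/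
/-!
Put `s` together with the vertices `vᵢ`, `i ∈ I`, into one block and `t` with the remaining
`vᵢ` into the other: no edge enters the first block, so the quotient graph is acyclic, and the
blocks balance exactly when `I` does. Conversely, a block of weight `3A/2` holding `k` of the two
terminals has weight `2 ∑_{i∈I} aᵢ + kA` with `I` its set of indices; since
`2 ∑_{i∈I} aᵢ ≤ A`, balance forces `k = 1` and `2 ∑_{i∈I} aᵢ = A/2` (or the degenerate `A = 0`).
-/

open Finset

namespace Finset

theorem compl_disjSum {α β : Type*} [Fintype α] [Fintype β] [DecidableEq α] [DecidableEq β]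
    (s : Finset α) (t : Finset β) : (s.disjSum t)ᶜ = sᶜ.disjSum tᶜ := by
  ext (x | x) <;> simp

end Finset

theorem sum_eq_two_mul_sum_toLeft_add_card_toRight_mul {ι β : Type*} {a : ι → ℕ} {A : ℕ}
    {c : ι ⊕ β → ℕ} (hcv : ∀ i, c (.inl i) = 2 * a i) (hcb : ∀ b, c (.inr b) = A)
    (S : Finset (ι ⊕ β)) :
    ∑ v ∈ S, c v = 2 * ∑ i ∈ S.toLeft, a i + #S.toRight * A := by
  simp [sum_sum_eq_sum_toLeft_add_sum_toRight, hcv, hcb, mul_sum]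

theorem two_mul_eq_of_two_mul_add_mul_eq {x T k : ℕ} (hx : x ≤ T)
    (h : 2 * (2 * x + k * (2 * T)) = 3 * (2 * T)) : 2 * x = T := by
  rcases k with _ | _ | k <;> nlinarith

/-- The vertices are `s = Sum.inr false`, `t = Sum.inr true` and `vᵢ = Sum.inl i`; the two blocks
are `S` and `Sᶜ`. -/
theorem stmt_8_general (n : ℕ) (a : Fin n → ℕ)
    (A : ℕ) (hA : A = ∑ i, 2 * a i)
    (c : Fin n ⊕ Bool → ℕ)
    (hcv : ∀ i, c (Sum.inl i) = 2 * a i)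
    (hcs : c (Sum.inr false) = A) (hct : c (Sum.inr true) = A)
    (E : (Fin n ⊕ Bool) → (Fin n ⊕ Bool) → Prop)
    (hE : ∀ u v, E u v ↔
      ((u = Sum.inr false ∧ ∃ i, v = Sum.inl i) ∨ ((∃ i, u = Sum.inl i) ∧ v = Sum.inr true))) :
    (∃ I : Finset (Fin n), ∑ i ∈ I, a i = ∑ i ∈ Iᶜ, a i) ↔
    (∃ S : Finset (Fin n ⊕ Bool),
      2 * (∑ v ∈ S, c v) = 3 * A ∧ 2 * (∑ v ∈ Sᶜ, c v) = 3 * A ∧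
      ¬((∃ u ∈ S, ∃ v, v ∉ S ∧ E u v) ∧ (∃ u, u ∉ S ∧ ∃ v ∈ S, E u v))) := by
  have hAsum : A = 2 * ∑ i, a i := by rw [hA, mul_sum]
  have weight := sum_eq_two_mul_sum_toLeft_add_card_toRight_mul hcv (c := c)
    (by rintro (_ | _) <;> assumption)
  constructor
  · rintro ⟨I, hI⟩
    have hsplit := sum_add_sum_compl I a
    refine ⟨I.disjSum {false}, ?_, ?_, ?_⟩
    · simp only [weight, toLeft_disjSum, toRight_disjSum, card_singleton]
      omega
    · have hcompl : ({false}ᶜ : Finset Bool) = {true} := by decide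
      simp only [compl_disjSum, hcompl, weight, toLeft_disjSum, toRight_disjSum, card_singleton]
      omega
    · rintro ⟨-, u, hu, v, hv, huv⟩
      rcases (hE u v).1 huv with ⟨rfl, -⟩ | ⟨-, rfl⟩
      · exact hu (by simp)
      · simp at hv
  · rintro ⟨S, hS, -, -⟩
    refine ⟨S.toLeft, ?_⟩
    have hhalf := two_mul_eq_of_two_mul_add_mul_eq
      (sum_le_univ_sum_of_nonneg fun _ => Nat.zero_le _) (by rwa [weight, hAsum] at hS)
    have hsplit := sum_add_sum_compl S.toLeft a
    omega

/-- NP-hardness reduction: the subset-sum (partition) instance `a₁,…,a_n` has a solution iff the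
constructed DAG (vertices `s = Sum.inr false`, `t = Sum.inr true`, `vᵢ = Sum.inl i`; edges
`(s,vᵢ)` and `(vᵢ,t)`; weights `c(s) = c(t) = A = ∑ 2aᵢ`, `c(vᵢ) = 2aᵢ`) admits a bipartition
into blocks `S`, `Sᶜ` of weight exactly `3A/2` each with acyclic quotient graph. -/
theorem stmt_8 (n : ℕ) (a : Fin n → ℕ) (ha : ∀ i, 0 < a i)
    (A : ℕ) (hA : A = ∑ i, 2 * a i)
    (c : Fin n ⊕ Bool → ℕ)
    (hcv : ∀ i, c (Sum.inl i) = 2 * a i)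
    (hcs : c (Sum.inr false) = A) (hct : c (Sum.inr true) = A)
    (E : (Fin n ⊕ Bool) → (Fin n ⊕ Bool) → Prop)
    (hE : ∀ u v, E u v ↔
      ((u = Sum.inr false ∧ ∃ i, v = Sum.inl i) ∨ ((∃ i, u = Sum.inl i) ∧ v = Sum.inr true))) :
    (∃ I : Finset (Fin n), ∑ i ∈ I, a i = ∑ i ∈ Iᶜ, a i) ↔
    (∃ S : Finset (Fin n ⊕ Bool),
      2 * (∑ v ∈ S, c v) = 3 * A ∧ 2 * (∑ v ∈ Sᶜ, c v) = 3 * A ∧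
      ¬((∃ u ∈ S, ∃ v, v ∉ S ∧ E u v) ∧ (∃ u, u ∉ S ∧ ∃ v ∈ S, E u v))) :=
  stmt_8_general n a A hA c hcv hcs hct E hE
end

section
/- Let G be the disjoint union of directed cliques on vertex sets S₁,…,S_n with |Sᵢ| = aᵢ, all vertex weights 1, and suppose Σᵢ aᵢ = kA with A/4 < aᵢ < A/2 for all i. Then G admits a partition into k blocks, each of weight exactly A, with zero cut edges and acyclic quotient graph, if and only if the multiset {a₁,…,a_n} can be partitioned into k triples each summing to A. -/
/-!
A zero-cut partition is constant on every clique, so it is induced by an assignment of the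
cliques to blocks, and its quotient graph has no edges at all. A block of weight `A` then
consists of whole cliques whose sizes sum to `A`; since each size lies strictly between `A / 4`
and `A / 2`, at most three and at least three cliques fit, so every block is a triple.
-/

open Finset

theorem card_filter_sigma_fst {ι : Type*} [Fintype ι] {β : ι → Type*} [∀ i, Fintype (β i)]
    (p : ι → Prop) [DecidablePred p] :
    #{x : Σ i, β i | p x.1} = ∑ i with p i, Fintype.card (β i) := by
  have hsigma :
      ({x : Σ i, β i | p x.1} : Finset _) = ({i | p i} : Finset ι).sigma fun _ ↦ univ := by
    ext x
    simp
  simp [hsigma, card_sigma]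

theorem card_eq_three_of_sum_eq {ι : Type*} {s : Finset ι} {a : ι → ℕ} {A : ℕ} (hA : 0 < A)
    (hbound : ∀ i ∈ s, A < 4 * a i ∧ 2 * a i < A) (hs : ∑ i ∈ s, a i = A) : #s = 3 := by
  have hupper : #s * (A + 1) ≤ 4 * A :=
    calc #s * (A + 1) = ∑ _i ∈ s, (A + 1) := by rw [sum_const, smul_eq_mul]
      _ ≤ ∑ i ∈ s, 4 * a i := sum_le_sum fun i hi ↦ (hbound i hi).1
      _ = 4 * A := by rw [← mul_sum, hs]
  have hlower : 2 * A + #s ≤ #s * A :=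
    calc 2 * A + #s = ∑ i ∈ s, (2 * a i + 1) := by
          rw [sum_add_distrib, ← mul_sum, hs, sum_const, smul_eq_mul, mul_one]
      _ ≤ ∑ _i ∈ s, A := sum_le_sum fun i hi ↦ (hbound i hi).2
      _ = #s * A := by rw [sum_const, smul_eq_mul]
  have hle : #s ≤ 3 := by nlinarith
  interval_cases #s <;> omega

theorem Sigma.eq_of_fst_eq_of_forall_lt {ι β : Type*} {α : ι → Type*}
    [∀ i, LinearOrder (α i)] {part : (Σ i, α i) → β}
    (hpart : ∀ i (u v : α i), u < v → part ⟨i, u⟩ = part ⟨i, v⟩)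
    {x y : Σ i, α i} (h : x.1 = y.1) : part x = part y := by
  obtain ⟨i, u⟩ := x
  obtain ⟨j, v⟩ := y
  obtain rfl : i = j := h
  rcases lt_trichotomy u v with huv | rfl | hvu
  · exact hpart i u v huv
  · rfl
  · exact (hpart i v u hvu).symm

theorem Relation.not_transGen_of_forall_not {α : Type*} {r : α → α → Prop}
    (hr : ∀ a b, ¬ r a b) {a b : α} : ¬ Relation.TransGen r a b := fun h ↦ by
  cases h with
  | single h => exact hr _ _ h
  | tail _ h => exact hr _ _ h

theorem stmt_13_general (k A : ℕ) (hA : 0 < A) (n : ℕ)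
    (a : Fin n → ℕ)
    (hbound : ∀ i, A < 4 * a i ∧ 2 * a i < A) :
    (∃ part : (Σ i : Fin n, Fin (a i)) → Fin k,
      (∀ j : Fin k, (Finset.univ.filter (fun x : Σ i : Fin n, Fin (a i) => part x = j)).card = A) ∧
      (∀ x y : Σ i : Fin n, Fin (a i), (x.1 = y.1 ∧ x.2.val < y.2.val) → part x = part y) ∧
      (∀ j : Fin k, ¬ Relation.TransGen
        (fun p q : Fin k => p ≠ q ∧ ∃ x y : Σ i : Fin n, Fin (a i),
          (x.1 = y.1 ∧ x.2.val < y.2.val) ∧ part x = p ∧ part y = q) j j)) ↔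
    (∃ f : Fin n → Fin k, ∀ j : Fin k,
      (Finset.univ.filter (fun i => f i = j)).card = 3 ∧
      ∑ i ∈ Finset.univ.filter (fun i => f i = j), a i = A) := by
  have hweight (f : Fin n → Fin k) (j : Fin k) :
      #{x : Σ i, Fin (a i) | f x.1 = j} = ∑ i with f i = j, a i := by
    simpa using card_filter_sigma_fst (β := fun i ↦ Fin (a i)) (f · = j)
  constructor
  · rintro ⟨part, hcard, hpart, -⟩
    have hpos (i : Fin n) : 0 < a i := by linarith [hbound i]
    let f (i : Fin n) : Fin k := part ⟨i, ⟨0, hpos i⟩⟩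
    have hclique (i : Fin n) (u v : Fin (a i)) (huv : u < v) : part ⟨i, u⟩ = part ⟨i, v⟩ :=
      hpart ⟨i, u⟩ ⟨i, v⟩ ⟨rfl, huv⟩
    have hfactor : part = fun x ↦ f x.1 :=
      funext fun x ↦ Sigma.eq_of_fst_eq_of_forall_lt hclique rfl
    have hblock (j : Fin k) : ∑ i with f i = j, a i = A := by
      rw [← hweight, ← hcard j, hfactor]
    exact ⟨f, fun j ↦
      ⟨card_eq_three_of_sum_eq hA (fun i _ ↦ hbound i) (hblock j), hblock j⟩⟩
  · rintro ⟨f, hf⟩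
    refine ⟨fun x ↦ f x.1, fun j ↦ (hweight f j).trans (hf j).2,
      fun x y h ↦ congrArg f h.1, fun j ↦ Relation.not_transGen_of_forall_not ?_⟩
    rintro p q ⟨hne, x, y, ⟨hxy, -⟩, rfl, rfl⟩
    exact hne (congrArg f hxy)

/-- 3-Partition reduction: the disjoint union of directed cliques `S₁,…,S_n` with `|Sᵢ| = aᵢ`,
unit vertex weights, `∑ aᵢ = kA` and `A/4 < aᵢ < A/2`, admits a partition into `k` blocks of
weight exactly `A` with zero cut edges (and hence acyclic quotient graph) iff the numbers
`a₁,…,a_n` can be partitioned into `k` triples each summing to `A`. -/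
theorem stmt_13 (k A : ℕ) (hA : 0 < A) (n : ℕ) (hn : n = 3 * k)
    (a : Fin n → ℕ)
    (hbound : ∀ i, A < 4 * a i ∧ 2 * a i < A)
    (hsum : ∑ i, a i = k * A) :
    (∃ part : (Σ i : Fin n, Fin (a i)) → Fin k,
      (∀ j : Fin k, (Finset.univ.filter (fun x : Σ i : Fin n, Fin (a i) => part x = j)).card = A) ∧
      (∀ x y : Σ i : Fin n, Fin (a i), (x.1 = y.1 ∧ x.2.val < y.2.val) → part x = part y) ∧
      (∀ j : Fin k, ¬ Relation.TransGen
        (fun p q : Fin k => p ≠ q ∧ ∃ x y : Σ i : Fin n, Fin (a i),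
          (x.1 = y.1 ∧ x.2.val < y.2.val) ∧ part x = p ∧ part y = q) j j)) ↔
    (∃ f : Fin n → Fin k, ∀ j : Fin k,
      (Finset.univ.filter (fun i => f i = j)).card = 3 ∧
      ∑ i ∈ Finset.univ.filter (fun i => f i = j), a i = A) :=
  stmt_13_general k A hA n a hbound
end
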